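/- For all positive integers n and real q with 0 < q < 1: ∑_{n ≥ k ≥ m ≥ 1} q^{k+m}/([k]_q^2 [m]_q^2) = ∑_{n ≥ k ≥ m ≥ p ≥ 1} (-1)^{k+1} q^{k(k+1)/2} C_q(n,k) q^m/([k]_q [m]_q^2 [p]_q). -/

import Mathlib

/-!
Write `T_N φ = ∑_{k=1}^N (-1)^(k+1) q^(k(k-1)/2) C_q(N,k) φ(k)`. Since
`[N] C_q(N,k) = [k] C_q(N,k) + q^k [k+1] C_q(N,k+1)`, the tails of the row `T_N` telescope
after multiplication by `[N]`, which gives summation by parts: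
`[N] T_N(∑_{m ≤ k} f m) = T_N([m] f m)`. The absorption identity
`[N+1] C_q(N,k) = [N+1-k] C_q(N+1,k)` gives
`T_{N+1}(q^k φ/[k]) = T_N(q^k φ/[k]) + q^(N+1)/[N+1] T_{N+1} φ`.
For `H_m = ∑_{p ≤ m} 1/[p]` the first identity yields `T_N H = 1/[N]`; then induction on `N`
with the second yields `T_N(q^m H_m/[m]) = ∑_{m ≤ N} q^m/[m]^2`. A last induction on `n`, using
both identities, shows that both sides of the theorem grow by
`q^(n+1)/[n+1]^2 ∑_{m ≤ n+1} q^m/[m]^2`.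
-/

/-- Gaussian binomial coefficient, vanishing unless `k ≤ n`. -/
noncomputable def qbinom (q : ℝ) (n k : ℕ) : ℝ :=
  if k ≤ n then ∏ j ∈ Finset.Icc 1 k, (1 - q ^ (n - k + j)) / (1 - q ^ j) else 0

/-- The `q`-analog of a natural number: `[k]_q = (1-q^k)/(1-q)`. -/
noncomputable def qnum (q : ℝ) (k : ℕ) : ℝ := (1 - q ^ k) / (1 - q)

open Finset

section QBinom

variable {q : ℝ}

lemma one_sub_pow_ne_zero (hq : |q| ≠ 1) {j : ℕ} (hj : j ≠ 0) : 1 - q ^ j ≠ 0 := by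
  intro h
  refine hq ((pow_eq_one_iff_of_nonneg (abs_nonneg q) hj).1 ?_)
  rw [← abs_pow, ← sub_eq_zero.1 h, abs_one]

lemma qnum_ne_zero (hq : |q| ≠ 1) {k : ℕ} (hk : k ≠ 0) : qnum q k ≠ 0 :=
  div_ne_zero (one_sub_pow_ne_zero hq hk) (by simpa using one_sub_pow_ne_zero hq one_ne_zero)

lemma qnum_add (hq : q ≠ 1) (a b : ℕ) : qnum q (a + b) = qnum q a + q ^ a * qnum q b := by
  have : 1 - q ≠ 0 := sub_ne_zero.2 hq.symm
  unfold qnum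
  field_simp
  ring

lemma qbinom_of_lt {n k : ℕ} (h : n < k) : qbinom q n k = 0 :=
  if_neg h.not_ge

lemma qbinom_zero_right (n : ℕ) : qbinom q n 0 = 1 := by
  simp [qbinom]

noncomputable def qPochhammer (q : ℝ) (k : ℕ) : ℝ := ∏ j ∈ range k, (1 - q ^ (j + 1))

lemma qPochhammer_succ (k : ℕ) :
    qPochhammer q (k + 1) = qPochhammer q k * (1 - q ^ (k + 1)) :=
  prod_range_succ _ _

lemma qPochhammer_ne_zero (hq : |q| ≠ 1) (k : ℕ) : qPochhammer q k ≠ 0 :=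
  prod_ne_zero_iff.2 fun j _ => one_sub_pow_ne_zero hq j.succ_ne_zero

lemma qbinom_add_eq_qPochhammer_div (hq : |q| ≠ 1) (k r : ℕ) :
    qbinom q (k + r) k =
      qPochhammer q (r + k) / (qPochhammer q k * qPochhammer q r) := by
  have hIcc : ∀ f : ℕ → ℝ, ∏ j ∈ Icc 1 k, f j = ∏ j ∈ range k, f (j + 1) := by
    intro f
    rw [← Ico_add_one_right_eq_Icc, prod_Ico_eq_prod_range]
    simp [add_comm]
  rw [qbinom, if_pos (Nat.le_add_right k r), hIcc, prod_div_distrib, Nat.add_sub_cancel_left,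
    qPochhammer, prod_range_add, ← qPochhammer, ← qPochhammer, mul_comm (qPochhammer q k),
    mul_div_mul_left _ _ (qPochhammer_ne_zero hq r)]
  simp only [add_assoc]

lemma qnum_succ_mul_qbinom_succ (hq : |q| ≠ 1) (n k : ℕ) :
    qnum q (k + 1) * qbinom q n (k + 1) = qnum q (n - k) * qbinom q n k := by
  rcases lt_or_ge k n with hkn | hnk
  · obtain ⟨r, rfl⟩ := Nat.exists_eq_add_of_lt hkn
    have hq1 : 1 - q ≠ 0 := by simpa using one_sub_pow_ne_zero hq one_ne_zero
    have hk := qPochhammer_ne_zero hq (q := q) k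
    have hr := qPochhammer_ne_zero hq (q := q) r
    have hk1 := one_sub_pow_ne_zero hq (q := q) k.succ_ne_zero
    have hr1 := one_sub_pow_ne_zero hq (q := q) r.succ_ne_zero
    have h1 := qbinom_add_eq_qPochhammer_div hq (q := q) (k + 1) r
    have h2 := qbinom_add_eq_qPochhammer_div hq (q := q) k (r + 1)
    rw [show k + 1 + r = k + r + 1 by ring, show r + (k + 1) = r + k + 1 by ring] at h1
    rw [show k + (r + 1) = k + r + 1 by ring, show r + 1 + k = r + k + 1 by ring] at h2
    rw [h1, h2, show k + r + 1 - k = r + 1 by omega, qPochhammer_succ k, qPochhammer_succ r,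
      qnum, qnum]
    field_simp
  · obtain rfl | hnk := hnk.eq_or_lt
    · simp [qnum, qbinom_of_lt (Nat.lt_succ_self _)]
    · rw [qbinom_of_lt hnk, qbinom_of_lt (hnk.trans k.lt_succ_self), mul_zero, mul_zero]

lemma qnum_succ_mul_qbinom (hq : |q| ≠ 1) (n k : ℕ) :
    qnum q (n + 1) * qbinom q n k = qnum q (n + 1 - k) * qbinom q (n + 1) k := by
  rcases le_or_gt k n with hkn | hnk
  · obtain ⟨r, rfl⟩ := Nat.exists_eq_add_of_le hkn
    have hq1 : 1 - q ≠ 0 := by simpa using one_sub_pow_ne_zero hq one_ne_zero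
    have hk := qPochhammer_ne_zero hq (q := q) k
    have hr := qPochhammer_ne_zero hq (q := q) r
    have hr1 := one_sub_pow_ne_zero hq (q := q) r.succ_ne_zero
    have h2 := qbinom_add_eq_qPochhammer_div hq (q := q) k (r + 1)
    rw [show k + (r + 1) = k + r + 1 by ring, show r + 1 + k = r + k + 1 by ring] at h2
    rw [qbinom_add_eq_qPochhammer_div hq, h2, show k + r + 1 - k = r + 1 by omega,
      qPochhammer_succ (r + k), qPochhammer_succ r, qnum, qnum, add_comm r k]
    field_simp
  · obtain rfl | hnk := Nat.succ_le_of_lt hnk |>.eq_or_lt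
    · simp [qnum, qbinom_of_lt (Nat.lt_succ_self _)]
    · rw [qbinom_of_lt hnk, qbinom_of_lt (n.lt_succ_self.trans hnk), mul_zero, mul_zero]

lemma qnum_mul_qbinom (hq : |q| ≠ 1) (n k : ℕ) :
    qnum q n * qbinom q n k =
      qnum q k * qbinom q n k + q ^ k * (qnum q (k + 1) * qbinom q n (k + 1)) := by
  rw [qnum_succ_mul_qbinom_succ hq]
  rcases le_or_gt k n with hkn | hnk
  · have hsplit := qnum_add (q := q) (fun h => hq (by simp [h])) k (n - k)
    rw [Nat.add_sub_cancel' hkn] at hsplit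
    rw [hsplit]
    ring
  · simp [qbinom_of_lt hnk]

lemma qnum_succ_mul_pow_mul_qbinom_sub (hq : |q| ≠ 1) (n k : ℕ) :
    qnum q (n + 1) * (q ^ k * (qbinom q (n + 1) k - qbinom q n k)) =
      q ^ (n + 1) * (qnum q k * qbinom q (n + 1) k) := by
  have h := qnum_succ_mul_qbinom hq (q := q) n k
  rcases le_or_gt k (n + 1) with hkn | hnk
  · have hsplit := qnum_add (q := q) (fun h => hq (by simp [h])) (n + 1 - k) k
    have hpow : q ^ (n + 1) = q ^ (n + 1 - k) * q ^ k := by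
      rw [← pow_add, Nat.sub_add_cancel hkn]
    rw [Nat.sub_add_cancel hkn] at hsplit
    rw [hpow]
    linear_combination (q ^ k * qbinom q (n + 1) k) * hsplit - q ^ k * h
  · simp [qbinom_of_lt hnk, qbinom_of_lt (n.lt_succ_self.trans hnk)]

end QBinom

section AltQBinomSum

variable {q : ℝ}

noncomputable def altQBinomSum (q : ℝ) (N : ℕ) (φ : ℕ → ℝ) : ℝ :=
  ∑ k ∈ Icc 1 N, (-1) ^ (k + 1) * q ^ k.choose 2 * qbinom q N k * φ k

lemma altQBinomSum_congr {N : ℕ} {φ ψ : ℕ → ℝ} (h : ∀ k, k ≠ 0 → φ k = ψ k) :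
    altQBinomSum q N φ = altQBinomSum q N ψ :=
  sum_congr rfl fun k hk => by rw [h k (by simp at hk; omega)]

lemma qnum_mul_sum_Icc_altQBinom (hq : |q| ≠ 1) {p N : ℕ} (hpN : p ≤ N) :
    qnum q N * ∑ k ∈ Icc p N, (-1) ^ (k + 1) * q ^ k.choose 2 * qbinom q N k =
      (-1) ^ (p + 1) * q ^ p.choose 2 * (qnum q p * qbinom q N p) := by
  set b : ℕ → ℝ := fun k => (-1) ^ (k + 1) * q ^ k.choose 2 * (qnum q k * qbinom q N k)
  have hterm : ∀ k, qnum q N * ((-1) ^ (k + 1) * q ^ k.choose 2 * qbinom q N k) =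
      -(b (k + 1) - b k) := by
    intro k
    simp only [b, Nat.choose_succ_succ', Nat.choose_one_right, pow_add, pow_succ (-1 : ℝ)]
    linear_combination ((-1) ^ (k + 1) * q ^ k.choose 2) * qnum_mul_qbinom hq N k
  rw [mul_sum, sum_congr rfl fun k _ => hterm k, sum_neg_distrib, sum_Icc_sub hpN]
  simp [b, qbinom_of_lt N.lt_succ_self]

lemma qnum_mul_altQBinomSum_partialSum (hq : |q| ≠ 1) (N : ℕ) (f : ℕ → ℝ) :
    qnum q N * altQBinomSum q N (fun k => ∑ m ∈ Icc 1 k, f m) =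
      altQBinomSum q N (fun m => qnum q m * f m) := by
  simp only [altQBinomSum, mul_sum]
  rw [sum_comm' (t' := Icc 1 N) (s' := fun m => Icc m N)
    (by intro k m; simp only [mem_Icc]; omega)]
  refine sum_congr rfl fun m hm => ?_
  have h := qnum_mul_sum_Icc_altQBinom hq (q := q) (mem_Icc.1 hm).2
  rw [mul_sum] at h
  simp_rw [← mul_assoc] at h ⊢
  rw [← sum_mul, h]
  ring

lemma altQBinomSum_one (hq : |q| ≠ 1) {N : ℕ} (hN : N ≠ 0) :
    altQBinomSum q N (fun _ => 1) = 1 := by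
  have h := qnum_mul_sum_Icc_altQBinom hq (q := q) (Nat.one_le_iff_ne_zero.2 hN)
  rw [qnum_succ_mul_qbinom_succ hq (k := 0), qbinom_zero_right] at h
  refine mul_left_cancel₀ (qnum_ne_zero hq hN) ?_
  simpa [altQBinomSum] using h

lemma altQBinomSum_succ (hq : |q| ≠ 1) (N : ℕ) (φ : ℕ → ℝ) :
    altQBinomSum q (N + 1) (fun k => q ^ k * φ k / qnum q k) =
      altQBinomSum q N (fun k => q ^ k * φ k / qnum q k) +
        q ^ (N + 1) / qnum q (N + 1) * altQBinomSum q (N + 1) φ := by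
  have hN := qnum_ne_zero hq (q := q) N.succ_ne_zero
  have hext : altQBinomSum q N (fun k => q ^ k * φ k / qnum q k) =
      ∑ k ∈ Icc 1 (N + 1),
        (-1) ^ (k + 1) * q ^ k.choose 2 * qbinom q N k * (q ^ k * φ k / qnum q k) := by
    rw [sum_Icc_succ_top (Nat.le_add_left 1 N), qbinom_of_lt N.lt_succ_self]
    simp [altQBinomSum]
  rw [hext, altQBinomSum, altQBinomSum, mul_sum, ← sum_add_distrib]
  refine sum_congr rfl fun k hk => ?_
  have hqk := qnum_ne_zero hq (q := q) (k := k) (by simp at hk; omega)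
  field_simp
  linear_combination (q ^ k.choose 2 * φ k) * qnum_succ_mul_pow_mul_qbinom_sub hq N k

end AltQBinomSum

section QHarmonic

variable {q : ℝ}

noncomputable def qHarmonic (q : ℝ) (m : ℕ) : ℝ := ∑ p ∈ Icc 1 m, (qnum q p)⁻¹

lemma altQBinomSum_qHarmonic (hq : |q| ≠ 1) {N : ℕ} (hN : N ≠ 0) :
    altQBinomSum q N (qHarmonic q) = (qnum q N)⁻¹ := by
  have h := qnum_mul_altQBinomSum_partialSum hq N (fun p => (qnum q p)⁻¹)
  rw [altQBinomSum_congr (ψ := fun _ => 1) fun m hm => mul_inv_cancel₀ (qnum_ne_zero hq hm),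
    altQBinomSum_one hq hN] at h
  exact eq_inv_of_mul_eq_one_right h

lemma altQBinomSum_pow_mul_qHarmonic_div (hq : |q| ≠ 1) (N : ℕ) :
    altQBinomSum q N (fun m => q ^ m * qHarmonic q m / qnum q m) =
      ∑ m ∈ Icc 1 N, q ^ m / qnum q m ^ 2 := by
  induction N with
  | zero => simp [altQBinomSum]
  | succ N ih =>
    rw [altQBinomSum_succ hq, ih, altQBinomSum_qHarmonic hq N.succ_ne_zero,
      sum_Icc_succ_top (Nat.le_add_left 1 N)]
    ring

lemma altQBinomSum_pow_mul_partialSum_div (hq : |q| ≠ 1) (n : ℕ) :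
    altQBinomSum q n
        (fun k => q ^ k * (∑ m ∈ Icc 1 k, q ^ m * qHarmonic q m / qnum q m ^ 2) / qnum q k) =
      ∑ k ∈ Icc 1 n, q ^ k / qnum q k ^ 2 * ∑ m ∈ Icc 1 k, q ^ m / qnum q m ^ 2 := by
  induction n with
  | zero => simp [altQBinomSum]
  | succ n ih =>
    have hn := qnum_ne_zero hq (q := q) n.succ_ne_zero
    have h := qnum_mul_altQBinomSum_partialSum hq (n + 1)
      (fun m => q ^ m * qHarmonic q m / qnum q m ^ 2)
    rw [altQBinomSum_congr (φ := fun m => qnum q m * (q ^ m * qHarmonic q m / qnum q m ^ 2))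
        (ψ := fun m => q ^ m * qHarmonic q m / qnum q m)
        fun m hm => by field_simp [qnum_ne_zero hq hm],
      altQBinomSum_pow_mul_qHarmonic_div hq] at h
    rw [altQBinomSum_succ hq, ih, sum_Icc_succ_top (Nat.le_add_left 1 n),
      eq_div_of_mul_eq hn ((mul_comm _ _).trans h)]
    ring

end QHarmonic

theorem example2_general (n : ℕ) (q : ℝ) (hq0 : 0 < q) (hq1 : q < 1) :
    (∑ k ∈ Finset.Icc 1 n, ∑ m ∈ Finset.Icc 1 k,
        q ^ (k + m) / ((qnum q k) ^ 2 * (qnum q m) ^ 2))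
    = ∑ k ∈ Finset.Icc 1 n, ∑ m ∈ Finset.Icc 1 k, ∑ p ∈ Finset.Icc 1 m,
        (-1 : ℝ) ^ (k + 1) * q ^ (k * (k + 1) / 2) * qbinom q n k *
          (q ^ m / (qnum q k * (qnum q m) ^ 2 * qnum q p)) := by
  have hq : |q| ≠ 1 := by rw [abs_of_pos hq0]; exact hq1.ne
  have hL : ∀ k, ∑ m ∈ Icc 1 k, q ^ (k + m) / (qnum q k ^ 2 * qnum q m ^ 2) =
      q ^ k / qnum q k ^ 2 * ∑ m ∈ Icc 1 k, q ^ m / qnum q m ^ 2 := fun k => by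
    rw [mul_sum]
    exact sum_congr rfl fun m _ => by ring
  have hR : ∀ k, ∑ m ∈ Icc 1 k, ∑ p ∈ Icc 1 m,
        (-1 : ℝ) ^ (k + 1) * q ^ (k * (k + 1) / 2) * qbinom q n k *
          (q ^ m / (qnum q k * qnum q m ^ 2 * qnum q p)) =
      (-1) ^ (k + 1) * q ^ k.choose 2 * qbinom q n k *
        (q ^ k * (∑ m ∈ Icc 1 k, q ^ m * qHarmonic q m / qnum q m ^ 2) / qnum q k) := by
    intro k
    have htri : k * (k + 1) / 2 = k.choose 2 + k := by
      rw [Nat.choose_two_right, ← Nat.triangle_succ, Nat.add_sub_cancel, mul_comm]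
    simp only [htri, pow_add, qHarmonic, mul_sum, sum_div]
    exact sum_congr rfl fun m _ => sum_congr rfl fun p _ => by ring
  simp only [hL, hR]
  exact (altQBinomSum_pow_mul_partialSum_div hq n).symm

theorem example2 (n : ℕ) (hn : 0 < n) (q : ℝ) (hq0 : 0 < q) (hq1 : q < 1) :
    (∑ k ∈ Finset.Icc 1 n, ∑ m ∈ Finset.Icc 1 k,
        q ^ (k + m) / ((qnum q k) ^ 2 * (qnum q m) ^ 2))
    = ∑ k ∈ Finset.Icc 1 n, ∑ m ∈ Finset.Icc 1 k, ∑ p ∈ Finset.Icc 1 m,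
        (-1 : ℝ) ^ (k + 1) * q ^ (k * (k + 1) / 2) * qbinom q n k *
          (q ^ m / (qnum q k * (qnum q m) ^ 2 * qnum q p)) :=
  example2_general n q hq0 hq1
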